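/- For integers n ≥ 2 and 1 ≤ k ≤ n-1, the number of rooted trees with k internal vertices (including the root, each internal vertex having at least two children) and n labelled leaves equals the number of partitions of {1,...,n+k-1} into k blocks each of size ≥ 2. -/

import Mathlib

/- Rooted trees with `n` labelled leaves and `k` internal vertices (each with ≥ 2
children) correspond bijectively to nested sets in `S₂(n,k)` (each internal vertex
is identified with the set of labels of its descendant leaves), so we count them
via this canonical representation. -/

/-- A nested set of `P₂({1,...,n})` with `k` elements. -/
def IsNested2 (n k : ℕ) (S : Finset (Finset ℕ)) : Prop :=
  S.card = k ∧ Finset.Icc 1 n ∈ S ∧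
  (∀ A ∈ S, A ⊆ Finset.Icc 1 n ∧ 2 ≤ A.card) ∧
  (∀ A ∈ S, ∀ B ∈ S, A ⊆ B ∨ B ⊆ A ∨ Disjoint A B)

/-- A partition of `{1,...,m}` into `k` blocks, each of cardinality ≥ 2. -/
def IsPart2 (m k : ℕ) (P : Finset (Finset ℕ)) : Prop :=
  P.card = k ∧ (∀ A ∈ P, 2 ≤ A.card) ∧
  (∀ A ∈ P, ∀ B ∈ P, A ≠ B → Disjoint A B) ∧
  P.biUnion id = Finset.Icc 1 m

/-!
Write `T(X, k)` for the number of nested sets on `X` with `k` members and `P(Y, k)` for the number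
of partitions of `Y` into `k` blocks of size `≥ 2`. Both satisfy a recurrence under removal of one
element `a`.

A nested set `S` on `X ∪ {a}` with `k + 1` members is a tree; delete the leaf `a`. If the parent
of `a` has at least three children, what remains is a tree on `X` with `k + 1` internal vertices
and `a` was a child of one of them. Otherwise the parent of `a` disappears as well, leaving a
tree on `X` with `k` internal vertices, and `a` was hung on the edge above one of its
`|X| + k` vertices (a leaf `j`: `{a, j} ∈ S`; an internal vertex `B`: `B, B ∪ {a} ∈ S`). Hence
`T(X ∪ {a}, k + 1) = (|X| + k) T(X, k) + (k + 1) T(X, k + 1)`.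

For a partition of `Y ∪ {a}` into `k + 1` blocks of size `≥ 2`, either the block of `a` is a
pair `{a, j}` and removing it leaves a partition of `Y \ {j}` into `k` blocks, or removing `a`
leaves a partition of `Y` into `k + 1` blocks. Hence
`P(Y ∪ {a}, k + 1) = ∑_{j ∈ Y} P(Y \ {j}, k) + (k + 1) P(Y, k + 1)`.

Induction on `|X| ≥ 2` then gives `T(X, k) = P(Y, k)` whenever `|Y| + 1 = |X| + k`.
-/

open Finset

variable {α : Type*}

lemma card_sigma_id_of_forall_card_eq {s : Finset (Finset α)} {k : ℕ}
    (h : ∀ t ∈ s, t.card = k) : (s.sigma id).card = k * s.card :=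
  (card_sigma _ _).trans ((sum_const_nat h).trans (mul_comm _ _))

def NestedOrDisjoint (A B : Finset α) : Prop := A ⊆ B ∨ B ⊆ A ∨ Disjoint A B

def IsLaminar (S : Finset (Finset α)) : Prop := ∀ A ∈ S, ∀ B ∈ S, NestedOrDisjoint A B

def IsNestedOn (X : Finset α) (S : Finset (Finset α)) : Prop :=
  X ∈ S ∧ (∀ A ∈ S, A ⊆ X ∧ 2 ≤ A.card) ∧ IsLaminar S

open Classical in
noncomputable def nestedSets (X : Finset α) (k : ℕ) : Finset (Finset (Finset α)) :=
  {S ∈ X.powerset.powerset | S.card = k ∧ IsNestedOn X S}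

lemma mem_nestedSets {X : Finset α} {k : ℕ} {S : Finset (Finset α)} :
    S ∈ nestedSets X k ↔ S.card = k ∧ IsNestedOn X S := by
  simp only [nestedSets, mem_filter, mem_powerset, and_iff_right_iff_imp]
  exact fun h A hA => mem_powerset.2 (h.2.2.1 A hA).1

namespace NestedOrDisjoint

variable {A B : Finset α}

lemma symm (h : NestedOrDisjoint A B) : NestedOrDisjoint B A := by
  rcases h with h | h | h
  exacts [Or.inr (Or.inl h), Or.inl h, Or.inr (Or.inr h.symm)]

lemma subset_or_subset (h : NestedOrDisjoint A B) {x : α} (hA : x ∈ A) (hB : x ∈ B) :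
    A ⊆ B ∨ B ⊆ A :=
  h.imp_right fun h => h.resolve_right fun hd => disjoint_left.1 hd hA hB

lemma erase [DecidableEq α] (h : NestedOrDisjoint A B) (a : α) :
    NestedOrDisjoint (A.erase a) (B.erase a) := by
  rcases h with h | h | h
  exacts [Or.inl (erase_subset_erase a h), Or.inr (Or.inl (erase_subset_erase a h)),
    Or.inr (Or.inr (h.mono (erase_subset a A) (erase_subset a B)))]

end NestedOrDisjoint

lemma IsLaminar.mono {S T : Finset (Finset α)} (hT : IsLaminar T) (h : S ⊆ T) : IsLaminar S :=
  fun A hA B hB => hT A (h hA) B (h hB)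

namespace IsNestedOn

variable {X C : Finset α} {S : Finset (Finset α)}

lemma isLaminar (hS : IsNestedOn X S) : IsLaminar S := hS.2.2

lemma subset (hS : IsNestedOn X S) (hC : C ∈ S) : C ⊆ X := (hS.2.1 C hC).1

lemma two_le_card (hS : IsNestedOn X S) (hC : C ∈ S) : 2 ≤ C.card := (hS.2.1 C hC).2

lemma nonempty (hS : IsNestedOn X S) (hC : C ∈ S) : C.Nonempty :=
  card_pos.1 (Nat.lt_of_lt_of_le two_pos (hS.two_le_card hC))

lemma notMem (hS : IsNestedOn X S) {a : α} (ha : a ∉ X) (hC : C ∈ S) : a ∉ C :=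
  fun haC => ha (hS.subset hC haC)

lemma singleton_notMem (hS : IsNestedOn X S) (j : α) : {j} ∉ S :=
  fun h => by simpa using hS.two_le_card h

end IsNestedOn

lemma card_nestedSets_zero (X : Finset α) : (nestedSets X 0).card = 0 := by
  rw [card_eq_zero, eq_empty_iff_forall_notMem]
  intro S hS
  obtain ⟨hcard, hX, -⟩ := mem_nestedSets.1 hS
  rw [card_eq_zero.1 hcard] at hX
  exact notMem_empty X hX

lemma card_nestedSets_of_card_eq_two {X : Finset α} (hX : X.card = 2) (k : ℕ) :
    (nestedSets X k).card = if k = 1 then 1 else 0 := by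
  have hsingle : ∀ S ∈ nestedSets X k, S = {X} := by
    intro S hS
    obtain ⟨-, hN⟩ := mem_nestedSets.1 hS
    exact eq_singleton_iff_unique_mem.2 ⟨hN.1, fun A hA =>
      eq_of_subset_of_card_le (hN.subset hA) (hX.trans_le (hN.two_le_card hA))⟩
  split_ifs with hk
  · subst hk
    refine card_eq_one.2 ⟨{X}, eq_singleton_iff_unique_mem.2 ⟨mem_nestedSets.2
      ⟨card_singleton X, mem_singleton_self X, by simp [hX],
        by simp [IsLaminar, NestedOrDisjoint]⟩,
      hsingle⟩⟩
  · rw [card_eq_zero, eq_empty_iff_forall_notMem]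
    exact fun S hS => hk (by rw [← (mem_nestedSets.1 hS).1, hsingle S hS, card_singleton])

variable [DecidableEq α]

namespace IsLaminar

variable {S : Finset (Finset α)}

lemma image_erase (hS : IsLaminar S) (a : α) : IsLaminar (S.image (·.erase a)) := by
  simp only [IsLaminar, mem_image, forall_exists_index, and_imp, forall_apply_eq_imp_iff₂]
  exact fun A hA B hB => (hS A hA B hB).erase a

lemma insert_singleton (hS : IsLaminar S) (j : α) : IsLaminar (insert {j} S) := by
  have hj : ∀ C, NestedOrDisjoint {j} C := fun C => by
    by_cases hjC : j ∈ C
    · exact Or.inl (singleton_subset_iff.2 hjC)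
    · exact Or.inr (Or.inr (disjoint_singleton_left.2 hjC))
  simp only [IsLaminar, mem_insert, forall_eq_or_imp]
  exact ⟨⟨hj _, fun C _ => hj C⟩, fun C hC => ⟨(hj C).symm, hS C hC⟩⟩

lemma exists_isLeast (hS : IsLaminar S) {a : α} (h : ∃ C ∈ S, a ∈ C) :
    ∃ P, IsLeast {C | C ∈ S ∧ a ∈ C} P := by
  obtain ⟨P, hP, hmin⟩ :=
    exists_min_image (S.filter (a ∈ ·)) card (by simpa [Finset.Nonempty])
  rw [mem_filter] at hP
  refine ⟨P, hP, fun C ⟨hC, haC⟩ => ?_⟩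
  rcases (hS P hP.1 C hC).subset_or_subset hP.2 haC with h | h
  · exact h
  · exact (eq_of_subset_of_card_le h (hmin C (mem_filter.2 ⟨hC, haC⟩))).ge

end IsLaminar

/-- Applied to all members of a nested set containing `B`, this makes the new leaf `a` a child of
the vertex `B`. -/
def graft (a : α) (B C : Finset α) : Finset α := if B ⊆ C then insert a C else C

section graft

variable {a : α} {B C D X : Finset α} {T : Finset (Finset α)}

lemma graft_of_subset (h : B ⊆ C) : graft a B C = insert a C := if_pos h

lemma graft_of_not_subset (h : ¬ B ⊆ C) : graft a B C = C := if_neg h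

lemma subset_graft : C ⊆ graft a B C := by
  unfold graft; split_ifs
  exacts [subset_insert a C, Subset.rfl]

lemma graft_subset_insert (h : C ⊆ X) : graft a B C ⊆ insert a X := by
  unfold graft; split_ifs
  exacts [insert_subset_insert a h, h.trans (subset_insert a X)]

lemma erase_graft (ha : a ∉ C) : (graft a B C).erase a = C := by
  unfold graft; split_ifs
  exacts [erase_insert ha, erase_eq_of_notMem ha]

lemma NestedOrDisjoint.graft_right (h : NestedOrDisjoint B C) :
    NestedOrDisjoint B (graft a B C) := by
  by_cases hBC : B ⊆ C
  · exact Or.inl (hBC.trans subset_graft)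
  · rwa [graft_of_not_subset hBC]

lemma NestedOrDisjoint.graft (hB : B.Nonempty) (hC : a ∉ C) (hD : a ∉ D)
    (h : NestedOrDisjoint C D) : NestedOrDisjoint (graft a B C) (graft a B D) := by
  by_cases hBC : B ⊆ C <;> by_cases hBD : B ⊆ D <;>
    simp only [graft_of_subset, graft_of_not_subset, hBC, hBD, not_false_eq_true]
  · rcases h with h | h | h
    · exact Or.inl (insert_subset_insert a h)
    · exact Or.inr (Or.inl (insert_subset_insert a h))
    · obtain ⟨x, hx⟩ := hB
      exact absurd (hBD hx) (disjoint_left.1 h (hBC hx))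
  · rcases h with h | h | h
    · exact absurd (hBC.trans h) hBD
    · exact Or.inr (Or.inl (h.trans (subset_insert a C)))
    · exact Or.inr (Or.inr (disjoint_insert_left.2 ⟨hD, h⟩))
  · rcases h with h | h | h
    · exact Or.inl (h.trans (subset_insert a D))
    · exact absurd (hBD.trans h) hBC
    · exact Or.inr (Or.inr (disjoint_insert_right.2 ⟨hC, h⟩))
  · exact h

lemma isLaminar_insert_image_graft (hT : IsLaminar T) (hB : B ∈ T) (hBne : B.Nonempty)
    (ha : ∀ C ∈ T, a ∉ C) : IsLaminar (insert B (T.image (graft a B))) := by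
  simp only [IsLaminar, mem_insert, mem_image, forall_eq_or_imp, forall_exists_index, and_imp,
    forall_apply_eq_imp_iff₂]
  refine ⟨⟨Or.inl Subset.rfl, fun D hD => (hT B hB D hD).graft_right⟩,
    fun C hC => ⟨(hT B hB C hC).graft_right.symm, fun D hD => ?_⟩⟩
  exact (hT C hC D hD).graft hBne (ha C hC) (ha D hD)

lemma image_erase_image_graft (ha : ∀ C ∈ T, a ∉ C) :
    (T.image (graft a B)).image (·.erase a) = T := by
  rw [image_image]
  exact (image_congr fun C hC => erase_graft (ha C hC)).trans image_id

lemma card_image_graft (ha : ∀ C ∈ T, a ∉ C) : (T.image (graft a B)).card = T.card :=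
  card_image_of_injOn fun C hC D hD h => by
    rw [← erase_graft (B := B) (ha C hC), ← erase_graft (B := B) (ha D hD)]
    exact congrArg (·.erase a) h

lemma mem_image_graft_of_notMem (hD : a ∉ D) :
    D ∈ T.image (graft a B) ↔ D ∈ T ∧ ¬ B ⊆ D := by
  constructor
  · rintro h
    obtain ⟨C, hC, rfl⟩ := mem_image.1 h
    by_cases hBC : B ⊆ C
    · rw [graft_of_subset hBC] at hD
      exact absurd (mem_insert_self a C) hD
    · rw [graft_of_not_subset hBC]
      exact ⟨hC, hBC⟩
  · rintro ⟨hDT, hBD⟩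
    exact mem_image.2 ⟨D, hDT, graft_of_not_subset hBD⟩

lemma insert_mem_image_graft (ha : ∀ C ∈ T, a ∉ C) (hD : a ∉ D) :
    insert a D ∈ T.image (graft a B) ↔ D ∈ T ∧ B ⊆ D := by
  constructor
  · rintro h
    obtain ⟨C, hC, hCD⟩ := mem_image.1 h
    have hBC : B ⊆ C := by
      by_contra hBC
      rw [graft_of_not_subset hBC] at hCD
      exact ha C hC (hCD ▸ mem_insert_self a D)
    obtain rfl : C = D := by rw [← erase_graft (B := B) (ha C hC), hCD, erase_insert hD]
    exact ⟨hC, hBC⟩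
  · rintro ⟨hDT, hBD⟩
    exact mem_image.2 ⟨D, hDT, graft_of_subset hBD⟩

lemma pair_notMem_image_graft (ha : ∀ C ∈ T, a ∉ C) (h2 : ∀ C ∈ T, 2 ≤ C.card)
    (j : α) : {a, j} ∉ T.image (graft a B) := by
  intro h
  obtain ⟨C, hC, hCj⟩ := mem_image.1 h
  have hsub : C ⊆ {j} := by
    rw [← erase_graft (B := B) (ha C hC), hCj]
    exact erase_insert_subset a {j}
  have := (h2 C hC).trans (card_le_card hsub)
  simp at this

lemma isLeast_image_graft (ha : ∀ C ∈ T, a ∉ C) (hB : B ∈ T) :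
    IsLeast {C | C ∈ T.image (graft a B) ∧ a ∈ C} (insert a B) := by
  refine ⟨⟨mem_image.2 ⟨B, hB, graft_of_subset Subset.rfl⟩, mem_insert_self a B⟩, ?_⟩
  rintro D ⟨hD, haD⟩
  obtain ⟨C, hC, rfl⟩ := mem_image.1 hD
  by_cases hBC : B ⊆ C
  · rw [graft_of_subset hBC]
    exact insert_subset_insert a hBC
  · rw [graft_of_not_subset hBC] at haD
    exact absurd haD (ha C hC)

lemma isNestedOn_image_graft (ha : a ∉ X) (hT : IsLaminar T) (hXT : X ∈ T)
    (hTX : ∀ C ∈ T, C ⊆ X) (hB : B ∈ T) (hBne : B.Nonempty)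
    (h2 : ∀ C ∈ T, 2 ≤ (graft a B C).card) :
    IsNestedOn (insert a X) (T.image (graft a B)) := by
  refine ⟨mem_image.2 ⟨X, hXT, graft_of_subset (hTX B hB)⟩, ?_,
    (isLaminar_insert_image_graft hT hB hBne fun C hC haC => ha (hTX C hC haC)).mono
      (subset_insert _ _)⟩
  simp only [mem_image, forall_exists_index, and_imp, forall_apply_eq_imp_iff₂]
  exact fun C hC => ⟨graft_subset_insert (hTX C hC), h2 C hC⟩

end graft

section parent

variable {a j : α} {X A B P : Finset α} {S : Finset (Finset α)}

lemma exists_eq_pair_of_card_eq_two (ha : a ∈ A) (h : A.card = 2) : ∃ j, A = {a, j} := by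
  obtain ⟨x, y, -, rfl⟩ := card_eq_two.1 h
  rcases mem_insert.1 ha with rfl | h
  · exact ⟨y, rfl⟩
  · exact ⟨x, by rw [mem_singleton.1 h, pair_comm]⟩

lemma two_le_card_erase_of_ne_pair (ha : a ∈ A) (h2 : 2 ≤ A.card) (hA : ∀ j, A ≠ {a, j}) :
    2 ≤ (A.erase a).card := by
  rw [card_erase_of_mem ha]
  have : A.card ≠ 2 := fun h => (exists_eq_pair_of_card_eq_two ha h).elim hA
  omega

lemma graft_erase_of_isLeast (hS : IsLaminar S) (hP : IsLeast {C | C ∈ S ∧ a ∈ C} P)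
    (hP2 : 2 ≤ P.card) {C : Finset α} (hC : C ∈ S) (hCP : C ≠ P.erase a) :
    graft a (P.erase a) (C.erase a) = C := by
  obtain ⟨⟨hPS, haP⟩, hmin⟩ := hP
  by_cases haC : a ∈ C
  · rw [graft_of_subset (erase_subset_erase a (hmin ⟨hC, haC⟩)), insert_erase haC]
  · rw [erase_eq_of_notMem haC, graft_of_not_subset]
    intro hBC
    rcases hS C hC P hPS with h | h | h
    · exact hCP (Subset.antisymm
        (fun x hx => mem_erase.2 ⟨fun hxa => haC (hxa ▸ hx), h hx⟩) hBC)
    · exact haC (h haP)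
    · have hB : P.erase a = ∅ :=
        (disjoint_self_iff_empty _).1 (h.mono hBC (erase_subset a P)).symm
      have := card_erase_of_mem haP
      rw [hB, card_empty] at this
      omega

/-- `P` is the parent of the leaf `a`, and `U` is `S` without the vertices that vanish when `a` is
deleted. -/
lemma exists_mem_nestedSets_image_graft (hS : IsNestedOn (insert a X) S) (ha : a ∉ X)
    (hP : IsLeast {C | C ∈ S ∧ a ∈ C} P) {U : Finset (Finset α)} (hU : U ⊆ S)
    (hXU : insert a X ∈ U) (hBU : P.erase a ∉ U) (hU2 : ∀ C ∈ U, 2 ≤ (C.erase a).card) :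
    ∃ S' ∈ nestedSets X U.card, S'.image (graft a (P.erase a)) = U := by
  have hid : ∀ C ∈ U, graft a (P.erase a) (C.erase a) = C := fun C hC =>
    graft_erase_of_isLeast hS.isLaminar hP (hS.two_le_card hP.1.1) (hU hC)
      fun h => hBU (h ▸ hC)
  have hcard : (U.image (·.erase a)).card = U.card :=
    card_image_of_injOn fun C hC D hD h => by
      rw [← hid C hC, ← hid D hD]
      exact congrArg (graft a (P.erase a)) h
  refine ⟨U.image (·.erase a), mem_nestedSets.2 ⟨hcard,
    mem_image.2 ⟨_, hXU, erase_insert ha⟩, ?_, (hS.isLaminar.mono hU).image_erase a⟩, ?_⟩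
  · simp only [mem_image, forall_exists_index, and_imp, forall_apply_eq_imp_iff₂]
    exact fun C hC => ⟨subset_insert_iff.1 (hS.subset (hU hC)), hU2 C hC⟩
  · rw [image_image]
    exact (image_congr hid).trans image_id

namespace IsNestedOn

lemma isLeast_pair (hS : IsNestedOn X S) (h : {a, j} ∈ S) :
    IsLeast {C | C ∈ S ∧ a ∈ C} {a, j} := by
  refine ⟨⟨h, mem_insert_self a {j}⟩, fun C ⟨hC, haC⟩ => ?_⟩
  rcases (hS.isLaminar _ h C hC).subset_or_subset (mem_insert_self a {j}) haC with h' | h'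
  · exact h'
  · exact (eq_of_subset_of_card_le h' (card_le_two.trans (hS.two_le_card hC))).ge

lemma isLeast_insert (hS : IsNestedOn X S) (hB : B ∈ S) (haB : a ∉ B) (h : insert a B ∈ S) :
    IsLeast {C | C ∈ S ∧ a ∈ C} (insert a B) := by
  refine ⟨⟨h, mem_insert_self a B⟩, fun C ⟨hC, haC⟩ => ?_⟩
  rcases (hS.isLaminar _ h C hC).subset_or_subset (mem_insert_self a B) haC with h' | h'
  · exact h'
  · obtain ⟨x, hx⟩ : (C.erase a).Nonempty := by
      rw [← card_pos, card_erase_of_mem haC]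
      have := hS.two_le_card hC
      omega
    rcases (hS.isLaminar B hB C hC).subset_or_subset (subset_insert_iff.1 h' hx)
      (mem_of_mem_erase hx) with h'' | h''
    · exact insert_subset haC h''
    · exact absurd (h'' haC) haB

lemma two_le_card_erase (hS : IsNestedOn X S) (hP : IsLeast {C | C ∈ S ∧ a ∈ C} P)
    (hP2 : 2 ≤ (P.erase a).card) {C : Finset α} (hC : C ∈ S) : 2 ≤ (C.erase a).card := by
  by_cases haC : a ∈ C
  · exact hP2.trans (card_le_card (erase_subset_erase a (hP.2 ⟨hC, haC⟩)))
  · rw [erase_eq_of_notMem haC]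
    exact hS.two_le_card hC

lemma ne_of_pair_mem (hS : IsNestedOn X S) (h : {a, j} ∈ S) : j ≠ a := by
  rintro rfl
  simpa using hS.two_le_card h

end IsNestedOn

end parent

section treeRecurrence

variable {a : α} {X : Finset α} {k : ℕ}

def HasPairWith (a : α) (S : Finset (Finset α)) : Prop := ∃ j, {a, j} ∈ S

def HasSiblingSet (a : α) (S : Finset (Finset α)) : Prop :=
  ∃ B ∈ S, a ∉ B ∧ insert a B ∈ S

lemma image_graft_mem_nestedSets (ha : a ∉ X) {S' : Finset (Finset α)}
    (hS' : S' ∈ nestedSets X k) {B : Finset α} (hB : B ∈ S') :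
    S'.image (graft a B) ∈ nestedSets (insert a X) k := by
  obtain ⟨hcard, hN⟩ := mem_nestedSets.1 hS'
  refine mem_nestedSets.2 ⟨by rw [card_image_graft fun C => hN.notMem ha, hcard], ?_⟩
  exact isNestedOn_image_graft ha hN.isLaminar hN.1 (fun C => hN.subset) hB (hN.nonempty hB)
    fun C hC => (hN.two_le_card hC).trans (card_le_card subset_graft)

lemma image_graft_pair_mem_nestedSets (ha : a ∉ X) {j : α} (hj : j ∈ X)
    {S' : Finset (Finset α)} (hS' : S' ∈ nestedSets X k) :
    (insert {j} S').image (graft a {j}) ∈ nestedSets (insert a X) (k + 1) := by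
  obtain ⟨hcard, hN⟩ := mem_nestedSets.1 hS'
  have hTX : ∀ C ∈ insert {j} S', C ⊆ X := by
    simpa [hj] using fun C => hN.subset
  have haj : a ≠ j := fun h => ha (h ▸ hj)
  refine mem_nestedSets.2 ⟨?_, isNestedOn_image_graft ha (hN.isLaminar.insert_singleton j)
    (mem_insert_of_mem hN.1) hTX (mem_insert_self _ _) (singleton_nonempty j) ?_⟩
  · rw [card_image_graft fun C hC haC => ha (hTX C hC haC),
      card_insert_of_notMem (hN.singleton_notMem j), hcard]
  · simp only [mem_insert, forall_eq_or_imp, graft_of_subset Subset.rfl, card_pair haj]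
    exact ⟨le_rfl, fun C hC => (hN.two_le_card hC).trans (card_le_card subset_graft)⟩

lemma injOn_image_graft_pair (ha : a ∉ X) :
    Set.InjOn (fun p : α × Finset (Finset α) => (insert {p.1} p.2).image (graft a {p.1}))
      (X ×ˢ nestedSets X k : Finset _) := by
  have haT : ∀ {j S'}, j ∈ X → S' ∈ nestedSets X k →
      ∀ C ∈ insert {j} S', a ∉ C := by
    intro j S' hj hS' C hC
    rcases mem_insert.1 hC with rfl | hC
    · exact notMem_singleton.2 fun h => ha (h ▸ hj)
    · exact (mem_nestedSets.1 hS').2.notMem ha hC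
  rintro ⟨j₁, S₁⟩ h₁ ⟨j₂, S₂⟩ h₂ h
  simp only [mem_coe, mem_product] at h₁ h₂ h
  have hpair := (isLeast_image_graft (haT h₁.1 h₁.2) (mem_insert_self _ _)).unique
    (h ▸ isLeast_image_graft (haT h₂.1 h₂.2) (mem_insert_self _ _))
  obtain rfl : j₁ = j₂ := by
    simpa [erase_insert (haT h₁.1 h₁.2 _ (mem_insert_self _ _)),
      erase_insert (haT h₂.1 h₂.2 _ (mem_insert_self _ _))] using congrArg (·.erase a) hpair
  have hT := congrArg (·.image (·.erase a)) h
  simp only [image_erase_image_graft (haT h₁.1 h₁.2),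
    image_erase_image_graft (haT h₂.1 h₂.2)] at hT
  rw [← erase_insert ((mem_nestedSets.1 h₁.2).2.singleton_notMem j₁), hT,
    erase_insert ((mem_nestedSets.1 h₂.2).2.singleton_notMem j₁)]

lemma exists_image_graft_pair_eq (ha : a ∉ X) (hX : 2 ≤ X.card) {S : Finset (Finset α)}
    (hS : S ∈ nestedSets (insert a X) (k + 1)) {j : α} (hj : {a, j} ∈ S) :
    j ∈ X ∧ ∃ S' ∈ nestedSets X k, (insert {j} S').image (graft a {j}) = S := by
  obtain ⟨hcard, hN⟩ := mem_nestedSets.1 hS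
  have hja := hN.ne_of_pair_mem hj
  have hP := hN.isLeast_pair hj
  have hPj : ({a, j} : Finset α).erase a = {j} := erase_insert (notMem_singleton.2 hja.symm)
  have hU2 : ∀ C ∈ S.erase {a, j}, 2 ≤ (C.erase a).card := by
    intro C hC
    obtain ⟨hCP, hC⟩ := mem_erase.1 hC
    by_cases haC : a ∈ C
    · have := card_lt_card (ssubset_of_subset_of_ne (hP.2 ⟨hC, haC⟩) hCP.symm)
      rw [card_pair hja.symm] at this
      rw [card_erase_of_mem haC]
      omega
    · rw [erase_eq_of_notMem haC]
      exact hN.two_le_card hC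
  have hXU : insert a X ∈ S.erase {a, j} := by
    refine mem_erase.2 ⟨fun h => ?_, hN.1⟩
    have := congrArg card h
    rw [card_insert_of_notMem ha, card_pair hja.symm] at this
    omega
  obtain ⟨S', hS', hU⟩ := exists_mem_nestedSets_image_graft hN ha hP (erase_subset _ _) hXU
    (by rw [hPj]; exact fun h => hN.singleton_notMem j (mem_of_mem_erase h)) hU2
  rw [card_erase_of_mem hj, hcard, Nat.add_sub_cancel] at hS'
  rw [hPj] at hU
  refine ⟨(mem_insert.1 (hN.subset hj (mem_insert_of_mem (mem_singleton_self j)))).resolve_left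
    hja, S', hS', ?_⟩
  rw [image_insert, graft_of_subset Subset.rfl, hU]
  exact insert_erase hj

open Classical in
lemma card_filter_hasPairWith_nestedSets (ha : a ∉ X) (hX : 2 ≤ X.card) :
    ((nestedSets (insert a X) (k + 1)).filter (HasPairWith a)).card =
      X.card * (nestedSets X k).card := by
  rw [← card_product]
  refine (card_nbij _ (fun p hp => ?_) (injOn_image_graft_pair ha) fun S hS => ?_).symm
  · obtain ⟨hj, hS'⟩ := mem_product.1 hp
    exact mem_filter.2 ⟨image_graft_pair_mem_nestedSets ha hj hS', p.1,
      mem_image.2 ⟨{p.1}, mem_insert_self _ _, graft_of_subset Subset.rfl⟩⟩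
  · obtain ⟨hSn, j, hj⟩ := mem_filter.1 hS
    obtain ⟨hjX, S', hS', rfl⟩ := exists_image_graft_pair_eq ha hX hSn hj
    exact ⟨(j, S'), mem_product.2 ⟨hjX, hS'⟩, rfl⟩

lemma insert_image_graft_mem_nestedSets (ha : a ∉ X) {S' : Finset (Finset α)}
    (hS' : S' ∈ nestedSets X k) {B : Finset α} (hB : B ∈ S') :
    insert B (S'.image (graft a B)) ∈ nestedSets (insert a X) (k + 1) := by
  obtain ⟨hcard, hN⟩ := mem_nestedSets.1 hS'
  obtain ⟨hcardG, hG⟩ := mem_nestedSets.1 (image_graft_mem_nestedSets ha hS' hB)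
  refine mem_nestedSets.2 ⟨?_, mem_insert_of_mem hG.1, ?_,
    isLaminar_insert_image_graft hN.isLaminar hB (hN.nonempty hB) fun C => hN.notMem ha⟩
  · rw [card_insert_of_notMem fun h =>
      ((mem_image_graft_of_notMem (hN.notMem ha hB)).1 h).2 Subset.rfl, hcardG]
  · simp only [mem_insert, forall_eq_or_imp]
    exact ⟨⟨(hN.subset hB).trans (subset_insert a X), hN.two_le_card hB⟩, hG.2.1⟩

lemma injOn_insert_image_graft (ha : a ∉ X) :
    Set.InjOn
      (fun p : (_ : Finset (Finset α)) × Finset α => insert p.2 (p.1.image (graft a p.2)))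
      ((nestedSets X k).sigma id : Finset _) := by
  rintro ⟨S₁, B₁⟩ h₁ ⟨S₂, B₂⟩ h₂ h
  simp only [mem_coe, mem_sigma, id] at h₁ h₂ h
  have hN := (mem_nestedSets.1 (insert_image_graft_mem_nestedSets ha h₂.1 h₂.2)).2
  have haS₁ := fun C => (mem_nestedSets.1 h₁.1).2.notMem ha (C := C)
  have haS₂ := fun C => (mem_nestedSets.1 h₂.1).2.notMem ha (C := C)
  have hsib : ∀ {S' : Finset (Finset α)} {B : Finset α}, B ∈ S' →
      insert a B ∈ insert B (S'.image (graft a B)) :=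
    fun hB => mem_insert_of_mem (mem_image.2 ⟨_, hB, graft_of_subset Subset.rfl⟩)
  obtain rfl : B₁ = B₂ := by
    have h₁' :=
      hN.isLeast_insert (h ▸ mem_insert_self _ _) (haS₁ _ h₁.2) (h ▸ hsib h₁.2)
    have := h₁'.unique (hN.isLeast_insert (mem_insert_self _ _) (haS₂ _ h₂.2) (hsib h₂.2))
    rw [← erase_insert (haS₁ _ h₁.2), this, erase_insert (haS₂ _ h₂.2)]
  have hS := congrArg (·.image (·.erase a)) h
  simp only [image_insert, erase_eq_of_notMem (haS₁ _ h₁.2), image_erase_image_graft haS₁,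
    image_erase_image_graft haS₂, insert_eq_of_mem h₁.2, insert_eq_of_mem h₂.2] at hS
  rw [hS]

lemma exists_insert_image_graft_eq (ha : a ∉ X) {S : Finset (Finset α)}
    (hS : S ∈ nestedSets (insert a X) (k + 1)) {B : Finset α} (hB : B ∈ S) (haB : a ∉ B)
    (hiB : insert a B ∈ S) :
    ∃ S' ∈ nestedSets X k, B ∈ S' ∧ insert B (S'.image (graft a B)) = S := by
  obtain ⟨hcard, hN⟩ := mem_nestedSets.1 hS
  have hP := hN.isLeast_insert hB haB hiB
  have hPB : (insert a B).erase a = B := erase_insert haB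
  have hne : ∀ {D}, a ∈ D → D ≠ B := fun haD h => haB (h ▸ haD)
  obtain ⟨S', hS', hU⟩ := exists_mem_nestedSets_image_graft hN ha hP (erase_subset _ _)
    (mem_erase.2 ⟨hne (mem_insert_self a X), hN.1⟩) (by rw [hPB]; exact notMem_erase B S)
    fun C hC => hN.two_le_card_erase hP (by rw [hPB]; exact hN.two_le_card hB) (mem_of_mem_erase hC)
  rw [card_erase_of_mem hB, hcard, Nat.add_sub_cancel] at hS'
  rw [hPB] at hU
  have hiBU : insert a B ∈ S'.image (graft a B) :=
    hU ▸ mem_erase.2 ⟨hne (mem_insert_self a B), hiB⟩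
  refine ⟨S', hS', ((insert_mem_image_graft (fun C => (mem_nestedSets.1 hS').2.notMem ha) haB).1
    hiBU).1, ?_⟩
  rw [hU]
  exact insert_erase hB

open Classical in
lemma card_filter_hasSiblingSet_nestedSets (ha : a ∉ X) :
    ((nestedSets (insert a X) (k + 1)).filter
      (fun S => ¬ HasPairWith a S ∧ HasSiblingSet a S)).card = k * (nestedSets X k).card := by
  rw [← card_sigma_id_of_forall_card_eq fun S' hS' => (mem_nestedSets.1 hS').1]
  refine (card_nbij _ (fun p hp => ?_) (injOn_insert_image_graft ha) fun S hS => ?_).symm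
  · obtain ⟨hS', hB⟩ := mem_sigma.1 hp
    have hN := (mem_nestedSets.1 hS').2
    refine mem_filter.2 ⟨insert_image_graft_mem_nestedSets ha hS' hB, ?_, p.2,
      mem_insert_self _ _, hN.notMem ha hB,
      mem_insert_of_mem (mem_image.2 ⟨p.2, hB, graft_of_subset Subset.rfl⟩)⟩
    rintro ⟨j, hj⟩
    rcases mem_insert.1 hj with h | h
    · exact hN.notMem ha hB (h ▸ mem_insert_self a {j})
    · exact pair_notMem_image_graft (fun C => hN.notMem ha) (fun C => hN.two_le_card) j h
  · obtain ⟨hSn, -, B, hB, haB, hiB⟩ := mem_filter.1 hS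
    obtain ⟨S', hS', hBS', rfl⟩ := exists_insert_image_graft_eq ha hSn hB haB hiB
    exact ⟨⟨S', B⟩, mem_sigma.2 ⟨hS', hBS'⟩, rfl⟩

lemma injOn_image_graft (ha : a ∉ X) :
    Set.InjOn (fun p : (_ : Finset (Finset α)) × Finset α => p.1.image (graft a p.2))
      ((nestedSets X k).sigma id : Finset _) := by
  rintro ⟨S₁, B₁⟩ h₁ ⟨S₂, B₂⟩ h₂ h
  simp only [mem_coe, mem_sigma, id] at h₁ h₂ h
  have haS₁ := fun C => (mem_nestedSets.1 h₁.1).2.notMem ha (C := C)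
  have haS₂ := fun C => (mem_nestedSets.1 h₂.1).2.notMem ha (C := C)
  obtain rfl : B₁ = B₂ := by
    have := (isLeast_image_graft haS₁ h₁.2).unique (h ▸ isLeast_image_graft haS₂ h₂.2)
    rw [← erase_insert (haS₁ _ h₁.2), this, erase_insert (haS₂ _ h₂.2)]
  rw [← image_erase_image_graft haS₁ (B := B₁), h, image_erase_image_graft haS₂]

lemma exists_image_graft_eq (ha : a ∉ X) {S : Finset (Finset α)}
    (hS : S ∈ nestedSets (insert a X) k) (hpair : ¬ HasPairWith a S)
    (hsib : ¬ HasSiblingSet a S) :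
    ∃ S' ∈ nestedSets X k, ∃ B ∈ S', S'.image (graft a B) = S := by
  obtain ⟨hcard, hN⟩ := mem_nestedSets.1 hS
  obtain ⟨P, hP⟩ := hN.isLaminar.exists_isLeast ⟨_, hN.1, mem_insert_self a X⟩
  have hPS : insert a (P.erase a) ∈ S := by rw [insert_erase hP.1.2]; exact hP.1.1
  obtain ⟨S', hS', hU⟩ := exists_mem_nestedSets_image_graft hN ha hP Subset.rfl hN.1
    (fun h => hsib ⟨_, h, notMem_erase a P, hPS⟩)
    fun C => hN.two_le_card_erase hP (two_le_card_erase_of_ne_pair hP.1.2 (hN.two_le_card hP.1.1)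
      fun j hj => hpair ⟨j, hj ▸ hP.1.1⟩)
  rw [hcard] at hS'
  refine ⟨S', hS', P.erase a, ?_, hU⟩
  rw [← hU] at hPS
  exact ((insert_mem_image_graft (fun C => (mem_nestedSets.1 hS').2.notMem ha)
    (notMem_erase a P)).1 hPS).1

open Classical in
lemma card_filter_not_hasSiblingSet_nestedSets (ha : a ∉ X) :
    ((nestedSets (insert a X) k).filter
      (fun S => ¬ HasPairWith a S ∧ ¬ HasSiblingSet a S)).card = k * (nestedSets X k).card := by
  rw [← card_sigma_id_of_forall_card_eq fun S' hS' => (mem_nestedSets.1 hS').1]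
  refine (card_nbij _ (fun p hp => ?_) (injOn_image_graft ha) fun S hS => ?_).symm
  · obtain ⟨hS', hB⟩ := mem_sigma.1 hp
    have hN := (mem_nestedSets.1 hS').2
    refine mem_filter.2 ⟨image_graft_mem_nestedSets ha hS' hB, fun ⟨j, hj⟩ => ?_,
      fun ⟨D, hD, haD, hiD⟩ => ?_⟩
    · exact pair_notMem_image_graft (fun C => hN.notMem ha) (fun C => hN.two_le_card) j hj
    · exact ((mem_image_graft_of_notMem haD).1 hD).2
        ((insert_mem_image_graft (fun C => hN.notMem ha) haD).1 hiD).2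
  · obtain ⟨hSn, hpair, hsib⟩ := mem_filter.1 hS
    obtain ⟨S', hS', B, hB, rfl⟩ := exists_image_graft_eq ha hSn hpair hsib
    exact ⟨⟨S', B⟩, mem_sigma.2 ⟨hS', hB⟩, rfl⟩

theorem card_nestedSets_insert (ha : a ∉ X) (hX : 2 ≤ X.card) :
    (nestedSets (insert a X) (k + 1)).card =
      (X.card + k) * (nestedSets X k).card + (k + 1) * (nestedSets X (k + 1)).card := by
  classical
  have hsplit := card_filter_add_card_filter_not
    (s := (nestedSets (insert a X) (k + 1)).filter fun S => ¬ HasPairWith a S) (HasSiblingSet a)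
  rw [filter_filter, filter_filter] at hsplit
  rw [← card_filter_add_card_filter_not (HasPairWith a), ← hsplit,
    card_filter_hasPairWith_nestedSets ha hX, card_filter_hasSiblingSet_nestedSets ha,
    card_filter_not_hasSiblingSet_nestedSets ha]
  ring

end treeRecurrence

section partitions

variable {a : α} {Y Z A B : Finset α} {P Q : Finset (Finset α)} {k : ℕ}

def IsPartitionOn (Y : Finset α) (P : Finset (Finset α)) : Prop :=
  (∀ A ∈ P, 2 ≤ A.card) ∧ (∀ A ∈ P, ∀ B ∈ P, A ≠ B → Disjoint A B) ∧
  P.biUnion id = Y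

open Classical in
noncomputable def partitions (Y : Finset α) (k : ℕ) : Finset (Finset (Finset α)) :=
  {P ∈ Y.powerset.powerset | P.card = k ∧ IsPartitionOn Y P}

namespace IsPartitionOn

lemma two_le_card (hP : IsPartitionOn Y P) (hA : A ∈ P) : 2 ≤ A.card := hP.1 A hA

lemma subset (hP : IsPartitionOn Y P) (hA : A ∈ P) : A ⊆ Y :=
  hP.2.2 ▸ subset_biUnion_of_mem id hA

lemma eq_of_mem_of_mem (hP : IsPartitionOn Y P) (hA : A ∈ P) (hB : B ∈ P) {x : α}
    (hxA : x ∈ A) (hxB : x ∈ B) : A = B := by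
  by_contra h
  exact disjoint_left.1 (hP.2.1 A hA B hB h) hxA hxB

lemma exists_mem (hP : IsPartitionOn Y P) {x : α} (hx : x ∈ Y) : ∃ A ∈ P, x ∈ A := by
  rw [← hP.2.2] at hx
  simpa using hx

lemma notMem (hP : IsPartitionOn Y P) (ha : a ∉ Y) (hA : A ∈ P) : a ∉ A :=
  fun h => ha (hP.subset hA h)

lemma notMem_of_disjoint (hP : IsPartitionOn Y P) (hAY : Disjoint A Y) (hA : A.Nonempty) :
    A ∉ P := by
  intro h
  obtain ⟨x, hx⟩ := hA
  exact disjoint_left.1 hAY hx (hP.subset h hx)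

lemma two_mul_card_le (hP : IsPartitionOn Y P) : 2 * P.card ≤ Y.card := by
  rw [← hP.2.2, card_biUnion (t := id) fun A hA B hB h => hP.2.1 A hA B hB h, mul_comm,
    ← smul_eq_mul]
  exact card_nsmul_le_sum P _ 2 hP.1

lemma erase (hP : IsPartitionOn Y P) (hA : A ∈ P) : IsPartitionOn (Y \ A) (P.erase A) := by
  refine ⟨fun B hB => hP.1 B (mem_of_mem_erase hB),
    fun B hB C hC => hP.2.1 B (mem_of_mem_erase hB) C (mem_of_mem_erase hC), ?_⟩
  ext x
  simp only [mem_biUnion, mem_erase, id, mem_sdiff]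
  constructor
  · rintro ⟨B, ⟨hBA, hB⟩, hxB⟩
    exact ⟨hP.subset hB hxB, fun hxA => hBA (hP.eq_of_mem_of_mem hB hA hxB hxA)⟩
  · rintro ⟨hxY, hxA⟩
    obtain ⟨B, hB, hxB⟩ := hP.exists_mem hxY
    exact ⟨B, ⟨fun h => hxA (h ▸ hxB), hB⟩, hxB⟩

lemma insert (hQ : IsPartitionOn Z Q) (hAZ : Disjoint A Z) (hA : 2 ≤ A.card) :
    IsPartitionOn (A ∪ Z) (insert A Q) := by
  have hdis : ∀ B ∈ Q, Disjoint A B := fun B hB => hAZ.mono_right (hQ.subset hB)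
  refine ⟨?_, ?_, by rw [biUnion_insert, hQ.2.2, id]⟩
  · simpa [hA] using hQ.1
  · simp only [Finset.mem_insert, forall_eq_or_imp, ne_eq, not_true_eq_false, IsEmpty.forall_iff,
      true_and]
    exact ⟨fun B hB _ => hdis B hB, fun B hB => ⟨fun _ => (hdis B hB).symm, hQ.2.1 B hB⟩⟩

end IsPartitionOn

lemma mem_partitions : P ∈ partitions Y k ↔ P.card = k ∧ IsPartitionOn Y P := by
  simp only [partitions, mem_filter, mem_powerset, and_iff_right_iff_imp]
  exact fun h A hA => mem_powerset.2 (h.2.subset hA)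

lemma insert_pair_mem_partitions (ha : a ∉ Y) {j : α} (hj : j ∈ Y)
    (hQ : Q ∈ partitions (Y.erase j) k) :
    insert {a, j} Q ∈ partitions (insert a Y) (k + 1) := by
  obtain ⟨hcard, hQ⟩ := mem_partitions.1 hQ
  have hdis : Disjoint {a, j} (Y.erase j) := by
    simp [disjoint_insert_left, ha, disjoint_singleton_left]
  refine mem_partitions.2 ⟨?_, ?_⟩
  · rw [card_insert_of_notMem (hQ.notMem_of_disjoint hdis (insert_nonempty a {j})), hcard]
  · convert hQ.insert hdis (card_pair (by rintro rfl; exact ha hj)).ge using 1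
    rw [insert_union, singleton_union, insert_erase hj]

lemma injOn_insert_pair (ha : a ∉ Y) :
    Set.InjOn (fun p : (_ : α) × Finset (Finset α) => insert {a, p.1} p.2)
      (Y.sigma fun j => partitions (Y.erase j) k : Finset _) := by
  rintro ⟨j₁, Q₁⟩ h₁ ⟨j₂, Q₂⟩ h₂ h
  simp only [mem_coe, mem_sigma] at h₁ h₂ h
  have hP := (mem_partitions.1 (insert_pair_mem_partitions ha h₂.1 h₂.2)).2
  have hpair := hP.eq_of_mem_of_mem (h ▸ mem_insert_self _ _) (mem_insert_self _ _)
    (mem_insert_self a {j₁}) (mem_insert_self a {j₂})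
  obtain rfl : j₁ = j₂ := by
    have : j₁ ∈ ({a, j₂} : Finset α) := hpair ▸ mem_insert_of_mem (mem_singleton_self j₁)
    rcases mem_insert.1 this with h | h
    · exact absurd (h ▸ h₁.1) ha
    · exact mem_singleton.1 h
  have hnot : ∀ {Q}, Q ∈ partitions (Y.erase j₁) k → {a, j₁} ∉ Q := fun hQ =>
    (mem_partitions.1 hQ).2.notMem_of_disjoint
      (by simp [disjoint_insert_left, ha, disjoint_singleton_left]) (insert_nonempty _ _)
  rw [← erase_insert (hnot h₁.2), h, erase_insert (hnot h₂.2)]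

lemma erase_pair_mem_partitions (ha : a ∉ Y) (hP : P ∈ partitions (insert a Y) (k + 1))
    {j : α} (hj : {a, j} ∈ P) : j ∈ Y ∧ P.erase {a, j} ∈ partitions (Y.erase j) k := by
  obtain ⟨hcard, hP⟩ := mem_partitions.1 hP
  have hja : j ≠ a := by
    rintro rfl
    simpa using hP.two_le_card hj
  refine ⟨(mem_insert.1 (hP.subset hj (by simp))).resolve_left hja,
    mem_partitions.2 ⟨?_, ?_⟩⟩
  · rw [card_erase_of_mem hj, hcard, Nat.add_sub_cancel]
  · convert hP.erase hj using 1
    rw [insert_sdiff_insert, sdiff_insert_of_notMem ha, sdiff_singleton_eq_erase]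

open Classical in
lemma card_filter_hasPairWith_partitions (ha : a ∉ Y) :
    ((partitions (insert a Y) (k + 1)).filter (HasPairWith a)).card =
      ∑ j ∈ Y, (partitions (Y.erase j) k).card := by
  rw [← card_sigma]
  refine (card_nbij _ (fun p hp => ?_) (injOn_insert_pair ha) fun P hP => ?_).symm
  · obtain ⟨hj, hQ⟩ := mem_sigma.1 hp
    exact mem_filter.2 ⟨insert_pair_mem_partitions ha hj hQ, p.1, mem_insert_self _ _⟩
  · obtain ⟨hPn, j, hj⟩ := mem_filter.1 hP
    obtain ⟨hjY, hQ⟩ := erase_pair_mem_partitions ha hPn hj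
    exact ⟨⟨j, P.erase {a, j}⟩, mem_sigma.2 ⟨hjY, hQ⟩, insert_erase hj⟩

lemma insert_insert_erase_mem_partitions (ha : a ∉ Y) (hQ : Q ∈ partitions Y (k + 1))
    (hB : B ∈ Q) : insert (insert a B) (Q.erase B) ∈ partitions (insert a Y) (k + 1) := by
  obtain ⟨hcard, hQ⟩ := mem_partitions.1 hQ
  have hdis : Disjoint (insert a B) (Y \ B) :=
    disjoint_insert_left.2 ⟨fun h => ha (mem_sdiff.1 h).1, disjoint_sdiff⟩
  refine mem_partitions.2 ⟨?_, ?_⟩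
  · rw [card_insert_of_notMem ((hQ.erase hB).notMem_of_disjoint hdis (insert_nonempty a B)),
      card_erase_of_mem hB, hcard, Nat.add_sub_cancel]
  · convert (hQ.erase hB).insert hdis
      ((hQ.two_le_card hB).trans (card_le_card (subset_insert a B))) using 1
    rw [insert_union, union_sdiff_of_subset (hQ.subset hB)]

lemma injOn_insert_insert_erase (ha : a ∉ Y) :
    Set.InjOn
      (fun p : (_ : Finset (Finset α)) × Finset α => insert (insert a p.2) (p.1.erase p.2))
      ((partitions Y (k + 1)).sigma id : Finset _) := by
  rintro ⟨Q₁, B₁⟩ h₁ ⟨Q₂, B₂⟩ h₂ h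
  simp only [mem_coe, mem_sigma, id] at h₁ h₂ h
  have hP := (mem_partitions.1 (insert_insert_erase_mem_partitions ha h₂.1 h₂.2)).2
  have haB₁ := (mem_partitions.1 h₁.1).2.notMem ha h₁.2
  have haB₂ := (mem_partitions.1 h₂.1).2.notMem ha h₂.2
  obtain rfl : B₁ = B₂ := by
    have := hP.eq_of_mem_of_mem (h ▸ mem_insert_self _ _) (mem_insert_self _ _)
      (mem_insert_self a B₁) (mem_insert_self a B₂)
    rw [← erase_insert haB₁, this, erase_insert haB₂]
  have hnot : ∀ {Q}, Q ∈ partitions Y (k + 1) → insert a B₁ ∉ Q.erase B₁ := fun hQ h =>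
    (mem_partitions.1 hQ).2.notMem ha (mem_of_mem_erase h) (mem_insert_self a B₁)
  rw [← insert_erase h₁.2, ← erase_insert (hnot h₁.1), h, erase_insert (hnot h₂.1),
    insert_erase h₂.2]

lemma exists_insert_insert_erase_eq (ha : a ∉ Y) (hP : P ∈ partitions (insert a Y) (k + 1))
    (hpair : ¬ HasPairWith a P) :
    ∃ Q ∈ partitions Y (k + 1), ∃ B ∈ Q, insert (insert a B) (Q.erase B) = P := by
  obtain ⟨hcard, hP⟩ := mem_partitions.1 hP
  obtain ⟨A, hA, haA⟩ := hP.exists_mem (mem_insert_self a Y)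
  have hB2 := two_le_card_erase_of_ne_pair haA (hP.two_le_card hA) fun j hj =>
    hpair ⟨j, hj ▸ hA⟩
  have hdis : Disjoint (A.erase a) (insert a Y \ A) := disjoint_sdiff.mono_left (erase_subset a A)
  have hBP : A.erase a ∉ P.erase A :=
    (hP.erase hA).notMem_of_disjoint hdis (card_pos.1 (by omega))
  refine ⟨insert (A.erase a) (P.erase A), mem_partitions.2 ⟨?_, ?_⟩, A.erase a,
    mem_insert_self _ _, ?_⟩
  · rw [card_insert_of_notMem hBP, card_erase_of_mem hA, hcard, Nat.add_sub_cancel]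
  · convert (hP.erase hA).insert hdis hB2 using 1
    rw [← erase_eq_of_notMem (notMem_sdiff_of_mem_right haA), ← erase_union_distrib,
      union_sdiff_of_subset (hP.subset hA), erase_insert ha]
  · rw [erase_insert hBP, insert_erase haA, insert_erase hA]

open Classical in
lemma card_filter_not_hasPairWith_partitions (ha : a ∉ Y) :
    ((partitions (insert a Y) (k + 1)).filter fun P => ¬ HasPairWith a P).card =
      (k + 1) * (partitions Y (k + 1)).card := by
  rw [← card_sigma_id_of_forall_card_eq fun Q hQ => (mem_partitions.1 hQ).1]
  refine (card_nbij _ (fun p hp => ?_) (injOn_insert_insert_erase ha) fun P hP => ?_).symm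
  · obtain ⟨hQ, hB⟩ := mem_sigma.1 hp
    have hPn := insert_insert_erase_mem_partitions ha hQ hB
    refine mem_filter.2 ⟨hPn, fun ⟨j, hj⟩ => ?_⟩
    have hQ := (mem_partitions.1 hQ).2
    have hjB : {a, j} = insert a p.2 := (mem_partitions.1 hPn).2.eq_of_mem_of_mem hj
      (mem_insert_self _ _) (mem_insert_self a {j}) (mem_insert_self a p.2)
    have h1 := card_le_card (show p.2 ⊆ {j} by
      rw [← erase_insert (hQ.notMem ha hB), ← hjB]
      exact erase_insert_subset a {j})
    have h2 := hQ.two_le_card hB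
    rw [card_singleton] at h1
    omega
  · obtain ⟨hPn, hpair⟩ := mem_filter.1 hP
    obtain ⟨Q, hQ, B, hB, rfl⟩ := exists_insert_insert_erase_eq ha hPn hpair
    exact ⟨⟨Q, B⟩, mem_sigma.2 ⟨hQ, hB⟩, rfl⟩

theorem card_partitions_insert (ha : a ∉ Y) :
    (partitions (insert a Y) (k + 1)).card =
      ∑ j ∈ Y, (partitions (Y.erase j) k).card + (k + 1) * (partitions Y (k + 1)).card := by
  classical
  rw [← card_filter_add_card_filter_not (HasPairWith a), card_filter_hasPairWith_partitions ha,
    card_filter_not_hasPairWith_partitions ha]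

end partitions

section main

lemma card_partitions_zero {Y : Finset α} (hY : Y.Nonempty) : (partitions Y 0).card = 0 := by
  rw [card_eq_zero, eq_empty_iff_forall_notMem]
  intro P hP
  obtain ⟨hcard, -, -, hPY⟩ := mem_partitions.1 hP
  rw [card_eq_zero.1 hcard, biUnion_empty] at hPY
  exact hY.ne_empty hPY.symm

lemma card_partitions_of_card_eq_succ {Y : Finset α} {k : ℕ} (hY : Y.card = k + 1) :
    (partitions Y k).card = if k = 1 then 1 else 0 := by
  split_ifs with hk
  · subst hk
    refine card_eq_one.2 ⟨{Y}, eq_singleton_iff_unique_mem.2 ⟨mem_partitions.2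
      ⟨card_singleton Y, by simp [hY], by simp, by simp⟩, fun P hP => ?_⟩⟩
    obtain ⟨hcard, hPY⟩ := mem_partitions.1 hP
    obtain ⟨A, rfl⟩ := card_eq_one.1 hcard
    rw [← hPY.2.2, singleton_biUnion, id]
  · rw [card_eq_zero, eq_empty_iff_forall_notMem]
    intro P hP
    obtain ⟨hcard, hPY⟩ := mem_partitions.1 hP
    have := hPY.two_mul_card_le
    obtain rfl : k = 0 := by omega
    have := card_partitions_zero (Y := Y) (card_pos.1 (by omega))
    rw [card_eq_zero] at this
    exact notMem_empty P (this ▸ hP)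

theorem card_nestedSets_eq_card_partitions {β : Type*} [DecidableEq β] {X : Finset α}
    {Y : Finset β} {k : ℕ} (hX : 2 ≤ X.card) (hXY : Y.card + 1 = X.card + k) :
    (nestedSets X k).card = (partitions Y k).card := by
  obtain ⟨n, hn⟩ : ∃ n, X.card = n := ⟨_, rfl⟩
  rw [hn] at hX hXY
  induction n, hX using Nat.le_induction generalizing X Y k with
  | base => rw [card_nestedSets_of_card_eq_two hn, card_partitions_of_card_eq_succ (by omega)]
  | succ n hn2 ih =>
    obtain ⟨a, haX⟩ := card_pos.1 (by omega : 0 < X.card)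
    have hXa : (X.erase a).card = n := by rw [card_erase_of_mem haX, hn]; rfl
    rw [← insert_erase haX]
    cases k with
    | zero => rw [card_nestedSets_zero, card_partitions_zero (card_pos.1 (by omega))]
    | succ k =>
      obtain ⟨b, hbY⟩ := card_pos.1 (by omega : 0 < Y.card)
      have hYb : (Y.erase b).card = n + k := by rw [card_erase_of_mem hbY]; omega
      rw [← insert_erase hbY, card_nestedSets_insert (notMem_erase a X) (by omega),
        card_partitions_insert (notMem_erase b Y), ← ih (Y := Y.erase b) (by omega) hXa,
        sum_congr rfl fun j hj => (ih (by rw [card_erase_of_mem hj]; omega) hXa).symm,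
        sum_const, smul_eq_mul, hXa, hYb]

end main

theorem stmt15_general (n k : ℕ) (hn : 2 ≤ n) :
    Nat.card {S : Finset (Finset ℕ) // IsNested2 n k S} =
      Nat.card {P : Finset (Finset ℕ) // IsPart2 (n + k - 1) k P} := by
  have hT : Nat.card {S // IsNested2 n k S} = (nestedSets (Icc 1 n) k).card :=
    (Nat.card_congr (Equiv.subtypeEquivRight fun _ => mem_nestedSets.symm)).trans
      (Nat.card_eq_finsetCard _)
  have hP : Nat.card {P // IsPart2 (n + k - 1) k P} = (partitions (Icc 1 (n + k - 1)) k).card :=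
    (Nat.card_congr (Equiv.subtypeEquivRight fun _ => mem_partitions.symm)).trans
      (Nat.card_eq_finsetCard _)
  rw [hT, hP]
  exact card_nestedSets_eq_card_partitions (by simpa using hn) (by simp; omega)

theorem stmt15 (n k : ℕ) (hn : 2 ≤ n) (hk1 : 1 ≤ k) (hk : k ≤ n - 1) :
    Nat.card {S : Finset (Finset ℕ) // IsNested2 n k S} =
      Nat.card {P : Finset (Finset ℕ) // IsPart2 (n + k - 1) k P} :=
  stmt15_general n k hn
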